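/- arXiv:2409.09571 — 4 statements merged into one kernel-verified Lean document; each statement's English description precedes it below -/
import Mathlib

section
/- Let A ∈ ℝ^{n×n}, B ∈ ℝ^{n×m}, and suppose P* is a symmetric positive definite solution of the algebraic Riccati equation AᵀP* + P*A + Q − P*BR⁻¹BᵀP* = 0, where Q is symmetric positive definite and R symmetric positive definite. Then the matrix A − BR⁻¹BᵀP* is Hurwitz (all its eigenvalues have negative real part). -/
open Matrix

/-- A real square matrix is Hurwitz if all its (complex) eigenvalues have
negative real part. -/
def IsHurwitz {ι : Type*} [Fintype ι] [DecidableEq ι] (A : Matrix ι ι ℝ) : Prop :=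
  ∀ μ ∈ spectrum ℂ (A.map Complex.ofReal), μ.re < 0

/-! The closed-loop matrix `K = A - B R⁻¹ Bᵀ P` satisfies the Lyapunov equation
`Kᵀ P + P K = -(Q + P B R⁻¹ Bᵀ P)`, whose right-hand side is negative definite. If `K v = μ v`
with `v ≠ 0` complex, the Hermitian form of this identity at `v` reads
`2 Re μ · v* P v = -v* (Q + P B R⁻¹ Bᵀ P) v`, and both forms are positive, so `Re μ < 0`. -/

open Complex ComplexOrder

namespace Matrix

variable {n : Type*} [Fintype n]

lemma IsSymm.dotProduct_mulVec_comm {α : Type*} [CommSemiring α] {M : Matrix n n α}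
    (hM : M.IsSymm) (x y : n → α) : x ⬝ᵥ M *ᵥ y = y ⬝ᵥ M *ᵥ x := by
  rw [dotProduct_mulVec, ← mulVec_transpose, hM.eq, dotProduct_comm]

lemma ofReal_dotProduct_mulVec (P : Matrix n n ℝ) (x y : n → ℝ) :
    ((x ⬝ᵥ P *ᵥ y : ℝ) : ℂ) = (fun i => (x i : ℂ)) ⬝ᵥ P.map ofReal *ᵥ fun i => (y i : ℂ) := by
  simp [dotProduct, mulVec]

lemma IsSymm.star_dotProduct_map_ofReal_mulVec {P : Matrix n n ℝ} (hP : P.IsSymm)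
    (x y : n → ℝ) :
    let v : n → ℂ := (fun i => (x i : ℂ)) + I • fun i => (y i : ℂ)
    star v ⬝ᵥ P.map ofReal *ᵥ v = ((x ⬝ᵥ P *ᵥ x + y ⬝ᵥ P *ᵥ y : ℝ) : ℂ) := by
  intro v
  have hstar : star v = (fun i => (x i : ℂ)) - I • fun i => (y i : ℂ) := by
    ext i; simp [v, sub_eq_add_neg, mul_comm]
  rw [hstar, ofReal_add, ofReal_dotProduct_mulVec, ofReal_dotProduct_mulVec]
  simp only [v, mulVec_add, mulVec_smul, dotProduct_add, sub_dotProduct, dotProduct_smul,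
    smul_dotProduct, smul_eq_mul]
  rw [(hP.map _).dotProduct_mulVec_comm (fun i => (y i : ℂ))]
  linear_combination (-((fun i => (y i : ℂ)) ⬝ᵥ P.map ofReal *ᵥ fun i => (y i : ℂ))) * I_sq

lemma PosDef.map_ofReal {P : Matrix n n ℝ} (hP : P.PosDef) : (P.map ofReal).PosDef := by
  refine posDef_iff_dotProduct_mulVec.mpr
    ⟨hP.isHermitian.map _ fun _ => (conj_ofReal _).symm, fun v hv => ?_⟩
  set x : n → ℝ := fun i => (v i).re
  set y : n → ℝ := fun i => (v i).im
  have hv_eq : v = (fun i => (x i : ℂ)) + I • fun i => (y i : ℂ) := by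
    ext i
    simp only [x, y, Pi.add_apply, Pi.smul_apply, smul_eq_mul]
    rw [mul_comm, re_add_im]
  have hxy : x ≠ 0 ∨ y ≠ 0 := by
    by_contra! h
    exact hv (funext fun i => Complex.ext (congrFun h.1 i) (congrFun h.2 i))
  have hPx := hP.dotProduct_mulVec_pos (x := x)
  have hPy := hP.dotProduct_mulVec_pos (x := y)
  have hPx' := hP.posSemidef.dotProduct_mulVec_nonneg x
  have hPy' := hP.posSemidef.dotProduct_mulVec_nonneg y
  simp only [star_trivial] at hPx hPy hPx' hPy'
  rw [hv_eq, (isHermitian_iff_isSymm.mp hP.isHermitian).star_dotProduct_map_ofReal_mulVec,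
    zero_lt_real]
  rcases hxy with hx | hy
  · exact add_pos_of_pos_of_nonneg (hPx hx) hPy'
  · exact add_pos_of_nonneg_of_pos hPx' (hPy hy)

theorem re_lt_zero_of_mem_spectrum_of_lyapunov [DecidableEq n] {K P W : Matrix n n ℂ}
    (hP : P.PosDef) (hW : W.PosDef) (hL : Kᴴ * P + P * K = -W) {μ : ℂ}
    (hμ : μ ∈ spectrum ℂ K) : μ.re < 0 := by
  rw [← spectrum_toLin', ← Module.End.hasEigenvalue_iff_mem_spectrum] at hμ
  obtain ⟨v, hv⟩ := hμ.exists_hasEigenvector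
  have hKv : K *ᵥ v = μ • v := by simpa using hv.apply_eq_smul
  have hquad : star v ⬝ᵥ (Kᴴ * P + P * K) *ᵥ v = (star μ + μ) * (star v ⬝ᵥ P *ᵥ v) := by
    rw [add_mulVec, dotProduct_add, ← mulVec_mulVec, ← mulVec_mulVec,
      dotProduct_mulVec (star v) Kᴴ, ← star_mulVec, hKv, mulVec_smul, star_smul,
      smul_dotProduct, dotProduct_smul, smul_eq_mul, smul_eq_mul, add_mul]
  rw [hL, neg_mulVec, dotProduct_neg, star_def, add_comm, add_conj] at hquad
  have hc := Complex.pos_iff.mp (hP.dotProduct_mulVec_pos hv.2)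
  have hw := Complex.pos_iff.mp (hW.dotProduct_mulVec_pos hv.2)
  have hre := congrArg Complex.re hquad
  simp only [neg_re, mul_re, ofReal_re, ofReal_im, hc.2] at hre
  nlinarith [hc.1, hw.1]

lemma lyapunov_eq_of_riccati_eq {α : Type*} [CommRing α] {A G P Q : Matrix n n α}
    (hG : G.IsSymm) (hP : P.IsSymm) (hare : Aᵀ * P + P * A + Q - P * G * P = 0) :
    (A - G * P)ᵀ * P + P * (A - G * P) = -(Q + P * G * P) := by
  rw [eq_neg_iff_add_eq_zero, ← hare, transpose_sub, transpose_mul, hG.eq, hP.eq]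
  simp only [Matrix.sub_mul, Matrix.mul_sub, Matrix.mul_assoc]
  abel

end Matrix

theorem IsHurwitz.of_lyapunov {n : Type*} [Fintype n] [DecidableEq n] {K P W : Matrix n n ℝ}
    (hP : P.PosDef) (hW : W.PosDef) (hL : Kᵀ * P + P * K = -W) : IsHurwitz K := by
  intro μ hμ
  refine re_lt_zero_of_mem_spectrum_of_lyapunov hP.map_ofReal hW.map_ofReal ?_ hμ
  rw [← conjTranspose_map _ fun _ => (conj_ofReal _).symm, conjTranspose_eq_transpose_of_trivial]
  have hLc := congrArg ofRealHom.mapMatrix hL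
  simp only [map_add, _root_.map_mul, map_neg, RingHom.mapMatrix_apply] at hLc
  exact hLc

theorem are_solution_gives_hurwitz_general {n m : ℕ}
    (A : Matrix (Fin n) (Fin n) ℝ) (B : Matrix (Fin n) (Fin m) ℝ)
    (Q P : Matrix (Fin n) (Fin n) ℝ) (R : Matrix (Fin m) (Fin m) ℝ)
    (hQ : Q.PosDef) (hR : R.PosDef)
    (hP : P.PosDef)
    (hare : Aᵀ * P + P * A + Q - P * B * R⁻¹ * Bᵀ * P = 0) :
    IsHurwitz (A - B * R⁻¹ * Bᵀ * P) := by
  have hG : (B * R⁻¹ * Bᵀ).PosSemidef := by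
    simpa using hR.inv.posSemidef.mul_mul_conjTranspose_same B
  have hPs : P.IsSymm := isHermitian_iff_isSymm.mp hP.isHermitian
  have hPGP : (P * (B * R⁻¹ * Bᵀ) * P).PosSemidef := by
    simpa [hPs.eq] using hG.conjTranspose_mul_mul_same P
  refine IsHurwitz.of_lyapunov hP (hQ.add_posSemidef hPGP) ?_
  exact lyapunov_eq_of_riccati_eq (isHermitian_iff_isSymm.mp hG.isHermitian) hPs
    (by simpa only [Matrix.mul_assoc] using hare)

theorem are_solution_gives_hurwitz {n m : ℕ}
    (A : Matrix (Fin n) (Fin n) ℝ) (B : Matrix (Fin n) (Fin m) ℝ)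
    (Q P : Matrix (Fin n) (Fin n) ℝ) (R : Matrix (Fin m) (Fin m) ℝ)
    (hQ : Q.PosDef) (hQs : Q.IsSymm) (hR : R.PosDef) (hRs : R.IsSymm)
    (hPs : P.IsSymm) (hP : P.PosDef)
    (hare : Aᵀ * P + P * A + Q - P * B * R⁻¹ * Bᵀ * P = 0) :
    IsHurwitz (A - B * R⁻¹ * Bᵀ * P) :=
  are_solution_gives_hurwitz_general A B Q P R hQ hR hP hare
end

section
/- Let A, B be matrices with A ∈ ℝ^{n×n}, B ∈ ℝ^{n×m}, let Q, R be symmetric positive definite, and suppose K_k is such that A_k = A + BK_k is Hurwitz. Let P_k be the symmetric positive definite solution of the Lyapunov equation A_kᵀP_k + P_kA_k + Q + K_kᵀRK_k = 0, and set K_{k+1} = −R⁻¹BᵀP_k. Then A + BK_{k+1} is also Hurwitz. -/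
/-!
With `K' = -R⁻¹BᵀP`, completing the square in the Lyapunov equation of `A + BK` gives
`(A + BK')ᵀP + P(A + BK') = -(Q + K'ᵀRK' + (K' - K)ᵀR(K' - K))`, which is negative definite.
So `P` is a Lyapunov matrix for `A + BK'`: if `(A + BK')v = μv` with `v ≠ 0`, then
`v*((A + BK')ᵀP + P(A + BK'))v = 2 Re μ · v*Pv`, and comparing signs gives `Re μ < 0`.
-/

open Matrix

namespace Matrix

variable {ι : Type*} [Fintype ι]

theorem exists_mulVec_eq_smul_of_mem_spectrum [DecidableEq ι] {K : Type*} [Field K]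
    {M : Matrix ι ι K} {μ : K} (h : μ ∈ spectrum K M) : ∃ v ≠ 0, M *ᵥ v = μ • v := by
  rw [← spectrum_toLin', ← Module.End.hasEigenvalue_iff_mem_spectrum] at h
  obtain ⟨v, hv⟩ := h.exists_hasEigenvector
  exact ⟨v, hv.2, by simpa using hv.apply_eq_smul⟩

theorem re_star_dotProduct_map_ofReal_mulVec (M : Matrix ι ι ℝ) (v : ι → ℂ) :
    (star v ⬝ᵥ (M.map Complex.ofReal *ᵥ v)).re =
      (fun i ↦ (v i).re) ⬝ᵥ (M *ᵥ fun i ↦ (v i).re) +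
        (fun i ↦ (v i).im) ⬝ᵥ (M *ᵥ fun i ↦ (v i).im) := by
  simp only [dotProduct, mulVec, Complex.re_sum, Finset.mul_sum, ← Finset.sum_add_distrib]
  refine Finset.sum_congr rfl fun i _ ↦ Finset.sum_congr rfl fun j _ ↦ ?_
  simp [Complex.mul_re, Complex.mul_im]

theorem PosDef.re_star_dotProduct_map_ofReal_mulVec_pos {P : Matrix ι ι ℝ} (hP : P.PosDef)
    {v : ι → ℂ} (hv : v ≠ 0) : 0 < (star v ⬝ᵥ (P.map Complex.ofReal *ᵥ v)).re := by
  rw [re_star_dotProduct_map_ofReal_mulVec]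
  have hquad (x : ι → ℝ) : 0 ≤ x ⬝ᵥ (P *ᵥ x) := by
    simpa using hP.posSemidef.dotProduct_mulVec_nonneg x
  by_cases hre : (fun i ↦ (v i).re) = 0
  · have him : (fun i ↦ (v i).im) ≠ 0 := fun him ↦ hv <| funext fun i ↦
      Complex.ext (congrFun hre i) (congrFun him i)
    simpa using add_pos_of_nonneg_of_pos (hquad _) (hP.dotProduct_mulVec_pos him)
  · simpa using add_pos_of_pos_of_nonneg (hP.dotProduct_mulVec_pos hre) (hquad _)

theorem star_dotProduct_map_ofReal_lyapunov_mulVec {A P : Matrix ι ι ℝ} {μ : ℂ} {v : ι → ℂ}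
    (hv : A.map Complex.ofReal *ᵥ v = μ • v) :
    star v ⬝ᵥ ((Aᵀ * P + P * A).map Complex.ofReal *ᵥ v) =
      (2 * μ.re : ℝ) * (star v ⬝ᵥ (P.map Complex.ofReal *ᵥ v)) := by
  have hAt : Aᵀ.map Complex.ofReal = (A.map Complex.ofReal)ᴴ := by
    ext i j; simp
  have hmul (X Y : Matrix ι ι ℝ) :
      (X * Y).map Complex.ofReal = X.map Complex.ofReal * Y.map Complex.ofReal :=
    Matrix.map_mul (f := Complex.ofRealHom)
  rw [Matrix.map_add _ Complex.ofReal_add, hmul, hmul, hAt, add_mulVec, ← mulVec_mulVec,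
    ← mulVec_mulVec, hv, dotProduct_add, dotProduct_mulVec, ← star_mulVec, hv]
  simp only [mulVec_smul, dotProduct_smul, star_smul, smul_dotProduct, smul_eq_mul, ← add_mul,
    RCLike.star_def, add_comm _ μ, Complex.add_conj]

theorem PosSemidef.transpose_mul_mul_same {κ : Type*} [Fintype κ] {R : Matrix κ κ ℝ}
    (hR : R.PosSemidef) (K : Matrix κ ι ℝ) : (Kᵀ * R * K).PosSemidef := by
  simpa using hR.conjTranspose_mul_mul_same K

theorem lyapunov_completing_square {α κ : Type*} [CommRing α] [Fintype κ]
    {A P : Matrix ι ι α} {B : Matrix ι κ α} {R : Matrix κ κ α} {K K' : Matrix κ ι α}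
    (hP : P.IsSymm) (hR : R.IsSymm) (hK' : R * K' = -(Bᵀ * P)) :
    (A + B * K')ᵀ * P + P * (A + B * K') + K'ᵀ * R * K' + (K' - K)ᵀ * R * (K' - K) =
      (A + B * K)ᵀ * P + P * (A + B * K) + Kᵀ * R * K := by
  have hBP : Bᵀ * P = -(R * K') := by rw [hK', neg_neg]
  have hPB : P * B = -(K'ᵀ * R) := by
    rw [← hR.eq, ← transpose_mul, hK', transpose_neg, transpose_mul, transpose_transpose, hP.eq,
      neg_neg]
  have hshift : (A + B * K')ᵀ * P + P * (A + B * K') =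
      (A + B * K)ᵀ * P + P * (A + B * K) + ((K' - K)ᵀ * (Bᵀ * P) + P * B * (K' - K)) := by
    simp only [transpose_add, transpose_sub, transpose_mul, Matrix.add_mul, Matrix.mul_add,
      Matrix.sub_mul, Matrix.mul_sub, Matrix.mul_assoc]
    abel
  rw [hshift, hPB, hBP]
  simp only [transpose_sub, Matrix.sub_mul, Matrix.mul_sub, Matrix.neg_mul, Matrix.mul_neg,
    Matrix.mul_assoc]
  abel

end Matrix

theorem IsHurwitz.of_lyapunov_s4 {ι : Type*} [Fintype ι] [DecidableEq ι] {A P : Matrix ι ι ℝ}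
    (hP : P.PosDef) (hS : (-(Aᵀ * P + P * A)).PosDef) : IsHurwitz A := by
  intro μ hμ
  obtain ⟨v, hv0, hv⟩ := exists_mulVec_eq_smul_of_mem_spectrum hμ
  have hPv := hP.re_star_dotProduct_map_ofReal_mulVec_pos hv0
  have hSv := hS.re_star_dotProduct_map_ofReal_mulVec_pos hv0
  rw [Matrix.map_neg _ Complex.ofReal_neg, neg_mulVec, dotProduct_neg,
    star_dotProduct_map_ofReal_lyapunov_mulVec hv, Complex.neg_re, Complex.re_ofReal_mul] at hSv
  nlinarith

theorem kleinman_step_preserves_hurwitz_general {n m : ℕ}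
    (A : Matrix (Fin n) (Fin n) ℝ) (B : Matrix (Fin n) (Fin m) ℝ)
    (Q Pk : Matrix (Fin n) (Fin n) ℝ) (R : Matrix (Fin m) (Fin m) ℝ)
    (Kk : Matrix (Fin m) (Fin n) ℝ)
    (hQ : Q.PosDef) (hR : R.PosDef) (hRs : R.IsSymm)
    (hPks : Pk.IsSymm) (hPk : Pk.PosDef)
    (hlyap : (A + B * Kk)ᵀ * Pk + Pk * (A + B * Kk) + Q + Kkᵀ * R * Kk = 0) :
    IsHurwitz (A + B * (-(R⁻¹ * Bᵀ * Pk))) := by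
  set K := -(R⁻¹ * Bᵀ * Pk)
  have hRK : R * K = -(Bᵀ * Pk) := by
    rw [Matrix.mul_neg, Matrix.mul_assoc, Matrix.mul_nonsing_inv_cancel_left _ _
      (R.isUnit_iff_isUnit_det.mp hR.isUnit)]
  have hsquare := lyapunov_completing_square (A := A) (K := Kk) hPks hRs hRK
  have hsplit : -((A + B * K)ᵀ * Pk + Pk * (A + B * K)) =
      Q + Kᵀ * R * K + (K - Kk)ᵀ * R * (K - Kk) := by
    linear_combination (norm := abel) -hsquare - hlyap
  refine IsHurwitz.of_lyapunov_s4 hPk ?_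
  rw [hsplit]
  exact (hQ.add_posSemidef (hR.posSemidef.transpose_mul_mul_same K)).add_posSemidef
    (hR.posSemidef.transpose_mul_mul_same (K - Kk))

theorem kleinman_step_preserves_hurwitz {n m : ℕ}
    (A : Matrix (Fin n) (Fin n) ℝ) (B : Matrix (Fin n) (Fin m) ℝ)
    (Q Pk : Matrix (Fin n) (Fin n) ℝ) (R : Matrix (Fin m) (Fin m) ℝ)
    (Kk : Matrix (Fin m) (Fin n) ℝ)
    (hQ : Q.PosDef) (hQs : Q.IsSymm) (hR : R.PosDef) (hRs : R.IsSymm)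
    (hAk : IsHurwitz (A + B * Kk))
    (hPks : Pk.IsSymm) (hPk : Pk.PosDef)
    (hlyap : (A + B * Kk)ᵀ * Pk + Pk * (A + B * Kk) + Q + Kkᵀ * R * Kk = 0) :
    IsHurwitz (A + B * (-(R⁻¹ * Bᵀ * Pk))) :=
  kleinman_step_preserves_hurwitz_general A B Q Pk R Kk hQ hR hRs hPks hPk hlyap
end

section
/- Let (G₁, G₂) be a minimum p-copy internal model of S, Y = [A, 0; G₂C, G₁], J = [B; G₂D], and K = [K_x, K_z] be such that Y + JK is Hurwitz. Assume S has no eigenvalue with negative real part. Then the regulator equations XS = AX + B(K_xX + K_zZ) + E, ZS = G₁Z + G₂(CX + D(K_xX + K_zZ) + F), 0 = CX + D(K_xX + K_zZ) + F admit a unique solution pair (X, Z). -/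
/-!
Write `W = [X; Z]` and `M = Y + JK`. The first two regulator equations say exactly that
`W S = M W + [E; G₂ F]`. Since `M` is Hurwitz and `S` has no eigenvalue in the open left
half-plane, `χ_M(S)` is invertible, so `W ↦ W S - M W` is injective and this Sylvester equation
has a unique solution.

The third equation then comes for free. With `e = C X + D (K_x X + K_z Z) + F`, the `i`-th block
of rows `Zᵢ` of `Z` satisfies `Zᵢ S = β Zᵢ + σ eᵢ`. Take a row vector `c` with `c β^k σ = δ_{k,r-1}`
for `k < r`, which exists by controllability. Then `y = c Zᵢ` has `y S^k = c β^k Zᵢ` for `k < r` and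
`y S^r = c β^r Zᵢ + eᵢ`. Applying `χ_β`, which annihilates both `β` and `S` (it is the minimal
polynomial of `S`), gives `0 = eᵢ`.
-/

open Matrix

open Polynomial

namespace Matrix

section Sylvester

variable {R ι κ : Type*} [Fintype ι] [DecidableEq ι] [Fintype κ] [DecidableEq κ]

theorem mul_pow_eq_pow_mul [Semiring R] {M : Matrix ι ι R} {S : Matrix κ κ R}
    {W : Matrix ι κ R} (h : W * S = M * W) (k : ℕ) : W * S ^ k = M ^ k * W := by
  induction k with
  | zero => simp
  | succ k ih => rw [pow_succ, ← Matrix.mul_assoc, ih, Matrix.mul_assoc, h, ← Matrix.mul_assoc,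
      ← pow_succ]

theorem mul_aeval_eq_aeval_mul [CommSemiring R] {M : Matrix ι ι R} {S : Matrix κ κ R}
    {W : Matrix ι κ R} (h : W * S = M * W) (g : R[X]) : W * aeval S g = aeval M g * W := by
  simp only [aeval_eq_sum_range, Matrix.mul_sum, Matrix.sum_mul, Matrix.mul_smul,
    Matrix.smul_mul, mul_pow_eq_pow_mul h]

theorem eq_zero_of_mul_eq_of_isUnit_aeval_charpoly [CommRing R] {M : Matrix ι ι R}
    {S : Matrix κ κ R} (hMS : IsUnit (aeval S M.charpoly)) {W : Matrix ι κ R}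
    (h : W * S = M * W) : W = 0 := by
  have hW : W * aeval S M.charpoly = 0 := by
    rw [mul_aeval_eq_aeval_mul h, aeval_self_charpoly, Matrix.zero_mul]
  calc W = W * aeval S M.charpoly * hMS.unit⁻¹.val := by
        rw [Matrix.mul_assoc, hMS.mul_val_inv, Matrix.mul_one]
    _ = 0 := by rw [hW, Matrix.zero_mul]

theorem existsUnique_mul_eq_mul_add [Field R] {M : Matrix ι ι R} {S : Matrix κ κ R}
    (hMS : IsUnit (aeval S M.charpoly)) (L : Matrix ι κ R) :
    ∃! W : Matrix ι κ R, W * S = M * W + L := by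
  let sylvester : Matrix ι κ R →ₗ[R] Matrix ι κ R :=
    { toFun W := W * S - M * W
      map_add' W V := by simp only [Matrix.add_mul, Matrix.mul_add]; abel
      map_smul' c W := by simp [Matrix.smul_mul, Matrix.mul_smul, smul_sub] }
  have hinj : Function.Injective sylvester := by
    rw [← LinearMap.ker_eq_bot, LinearMap.ker_eq_bot']
    exact fun W hW => eq_zero_of_mul_eq_of_isUnit_aeval_charpoly hMS (sub_eq_zero.mp hW)
  obtain ⟨W, hW⟩ := LinearMap.injective_iff_surjective.mp hinj L
  change W * S - M * W = L at hW
  refine ⟨W, eq_add_of_sub_eq' hW, fun V hV => hinj ?_⟩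
  change V * S - M * V = W * S - M * W
  rw [hW, hV, add_sub_cancel_left]

end Sylvester

section Spectrum

variable {ι κ : Type*} [Fintype ι] [DecidableEq ι] [Fintype κ] [DecidableEq κ]

theorem isUnit_aeval_charpoly_of_disjoint_spectrum {K : Type*} [Field K] [IsAlgClosed K]
    {M : Matrix ι ι K} {S : Matrix κ κ K} (h : Disjoint (spectrum K M) (spectrum K S)) :
    IsUnit (aeval S M.charpoly) := by
  rcases isEmpty_or_nonempty ι with hι | hι
  · simp [charpoly_isEmpty]
  have hdeg : 0 < M.charpoly.degree := by
    rw [charpoly_degree_eq_dim]; exact_mod_cast Fintype.card_pos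
  rw [← spectrum.zero_notMem_iff K, spectrum.map_polynomial_aeval_of_degree_pos _ _ hdeg]
  rintro ⟨μ, hμS, hμM⟩
  exact h.notMem_of_mem_right hμS (mem_spectrum_of_isRoot_charpoly hμM)

theorem isUnit_aeval_charpoly_of_disjoint_spectrum_map {K L : Type*} [Field K] [Field L]
    [IsAlgClosed L] [Algebra K L] {M : Matrix ι ι K} {S : Matrix κ κ K}
    (h : Disjoint (spectrum L (M.map (algebraMap K L))) (spectrum L (S.map (algebraMap K L)))) :
    IsUnit (aeval S M.charpoly) := by
  have hL := isUnit_aeval_charpoly_of_disjoint_spectrum h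
  rw [charpoly_map, aeval_map_algebraMap] at hL
  change IsUnit (aeval ((Algebra.ofId K L).mapMatrix S) _) at hL
  rw [aeval_algHom_apply] at hL
  rw [isUnit_iff_isUnit_det, isUnit_iff_ne_zero] at hL ⊢
  change ((algebraMap K L).mapMatrix (aeval S M.charpoly)).det ≠ 0 at hL
  rwa [← RingHom.map_det, _root_.map_ne_zero] at hL

theorem isUnit_aeval_charpoly_of_isHurwitz {M : Matrix ι ι ℝ} {S : Matrix κ κ ℝ}
    (hM : IsHurwitz M)
    (hS : ∀ μ ∈ spectrum ℂ (S.map Complex.ofReal), 0 ≤ μ.re) :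
    IsUnit (aeval S M.charpoly) :=
  isUnit_aeval_charpoly_of_disjoint_spectrum_map <| Set.disjoint_left.mpr fun μ hμM hμS =>
    (hM μ hμM).not_ge (hS μ hμS)

end Spectrum

section InternalModel

variable {K κ : Type*} [Field K] [Fintype κ] [DecidableEq κ] {r : ℕ}

def controllabilityMatrix (β : Matrix (Fin r) (Fin r) K) (σ : Fin r → K) :
    Matrix (Fin r) (Fin r) K :=
  of fun a b => (β ^ (b : ℕ) *ᵥ σ) a

theorem isUnit_of_rank_eq {A : Matrix κ κ K} (h : A.rank = Fintype.card κ) : IsUnit A := by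
  have hrange : LinearMap.range A.mulVecLin = ⊤ := by
    apply Submodule.eq_top_of_finrank_eq
    rw [← Matrix.rank, h, Module.finrank_fintype_fun_eq_card]
  exact mulVec_surjective_iff_isUnit.mp (LinearMap.range_eq_top.mp hrange)

theorem exists_dotProduct_pow_mulVec_eq_ite {s : ℕ} {β : Matrix (Fin (s + 1)) (Fin (s + 1)) K}
    {σ : Fin (s + 1) → K} (h : (controllabilityMatrix β σ).rank = s + 1) :
    ∃ c : Fin (s + 1) → K, ∀ k ≤ s, c ⬝ᵥ (β ^ k *ᵥ σ) = if k = s then 1 else 0 := by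
  obtain ⟨c, hc⟩ := vecMul_surjective_iff_isUnit.mpr
    (isUnit_of_rank_eq (h.trans (Fintype.card_fin _).symm)) (Pi.single (Fin.last s) 1)
  refine ⟨c, fun k hk => ?_⟩
  simpa [vecMul, controllabilityMatrix, Pi.single_apply, Fin.ext_iff] using
    congrFun hc ⟨k, Nat.lt_succ_of_le hk⟩

theorem eq_zero_of_mul_eq_mul_add_vecMulVec {β : Matrix (Fin r) (Fin r) K}
    {σ : Fin r → K} {S : Matrix κ κ K} (hS : aeval S β.charpoly = 0)
    (hctrb : (controllabilityMatrix β σ).rank = r) {Z : Matrix (Fin r) κ K} {w : κ → K}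
    (hZ : Z * S = β * Z + vecMulVec σ w) : w = 0 := by
  rcases r with _ | s
  · rw [charpoly_isEmpty, map_one] at hS
    rw [← vecMul_one w, hS, vecMul_zero]
  obtain ⟨c, hc⟩ := exists_dotProduct_pow_mulVec_eq_ite hctrb
  have hpow : ∀ k ≤ s + 1,
      (c ᵥ* Z) ᵥ* S ^ k - (c ᵥ* β ^ k) ᵥ* Z = if k = s + 1 then w else 0 := by
    intro k hk
    induction k with
    | zero => simp
    | succ k ih =>
      have ih := sub_eq_zero.mp ((ih (by omega)).trans (if_neg (by omega)))
      rw [pow_succ, ← vecMul_vecMul, ih, vecMul_vecMul, hZ, vecMul_add, vecMul_vecMulVec,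
        ← dotProduct_mulVec, hc k (by omega), vecMul_vecMul, vecMul_vecMul, ← Matrix.mul_assoc,
        ← pow_succ, add_sub_cancel_left]
      simp
  have hdeg : β.charpoly.natDegree = s + 1 := by simp
  have hlead := (charpoly_monic β).coeff_natDegree
  rw [hdeg] at hlead
  calc w = ∑ k ∈ Finset.range (s + 2), β.charpoly.coeff k • (if k = s + 1 then w else 0) := by
        simp [hlead]
    _ = ∑ k ∈ Finset.range (s + 2),
          β.charpoly.coeff k • ((c ᵥ* Z) ᵥ* S ^ k - (c ᵥ* β ^ k) ᵥ* Z) :=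
        Finset.sum_congr rfl fun k hk => by
          rw [hpow k (Nat.lt_succ_iff.mp (Finset.mem_range.mp hk))]
    _ = (c ᵥ* Z) ᵥ* aeval S β.charpoly - (c ᵥ* aeval β β.charpoly) ᵥ* Z := by
        simp only [aeval_eq_sum_range, hdeg, smul_sub, Finset.sum_sub_distrib, vecMul_sum,
          sum_vecMul, vecMul_smul, smul_vecMul]
    _ = 0 := by simp [hS, aeval_self_charpoly]

end InternalModel

section Blocks

variable {R ι κ ν : Type*} [Fintype κ] [DecidableEq κ]

theorem fromRows_add_fromRows [Add R] {m₁ m₂ : Type*} (A₁ B₁ : Matrix m₁ ν R)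
    (A₂ B₂ : Matrix m₂ ν R) : fromRows A₁ A₂ + fromRows B₁ B₂ = fromRows (A₁ + B₁) (A₂ + B₂) := by
  ext (_ | _) _ <;> rfl

theorem submatrix_prodMk_mul_of_blockDiag [Fintype ι] [Semiring R] {β : Matrix ι ι R}
    {G : Matrix (κ × ι) (κ × ι) R} (hG : G = fun x y => if x.1 = y.1 then β x.2 y.2 else 0)
    (Z : Matrix (κ × ι) ν R) (i : κ) :
    (G * Z).submatrix (Prod.mk i) id = β * Z.submatrix (Prod.mk i) id := by
  ext a t
  rw [submatrix_apply, mul_apply, mul_apply, Fintype.sum_prod_type]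
  simp [hG, ite_mul]

theorem submatrix_prodMk_mul_of_blockCol [Semiring R] {σ : ι → R}
    {G : Matrix (κ × ι) κ R} (hG : G = fun x j => if x.1 = j then σ x.2 else 0)
    (e : Matrix κ ν R) (i : κ) :
    (G * e).submatrix (Prod.mk i) id = vecMulVec σ (e i) := by
  ext a t
  rw [submatrix_apply, mul_apply]
  simp [hG, ite_mul, vecMulVec_apply]

theorem fromRows_mul_eq_closedLoop_iff {R : Type*} [Ring R] {n m p q ι : Type*}
    [Fintype n] [Fintype m] [Fintype p] [Fintype q] [Fintype ι]
    (A : Matrix n n R) (B : Matrix n m R) (C : Matrix p n R) (D : Matrix p m R)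
    (E : Matrix n q R) (F : Matrix p q R) (S : Matrix q q R) (Kx : Matrix m n R)
    (Kz : Matrix m ι R) (G₁ : Matrix ι ι R) (G₂ : Matrix ι p R)
    (X : Matrix n q R) (Z : Matrix ι q R) :
    fromRows X Z * S = (fromBlocks A 0 (G₂ * C) G₁ + fromRows B (G₂ * D) * fromCols Kx Kz) *
        fromRows X Z + fromRows E (G₂ * F) ↔
      X * S = A * X + B * (Kx * X + Kz * Z) + E ∧
      Z * S = G₁ * Z + G₂ * (C * X + D * (Kx * X + Kz * Z) + F) := by
  rw [Matrix.add_mul, Matrix.mul_assoc, fromBlocks_mul_fromRows, fromCols_mul_fromRows,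
    fromRows_mul, fromRows_mul, fromRows_add_fromRows, fromRows_add_fromRows, fromRows_ext_iff,
    Matrix.zero_mul, add_zero]
  refine and_congr_right' (Eq.congr_right ?_)
  simp only [Matrix.mul_add, Matrix.mul_assoc]
  abel

end Blocks

section RegulationError

variable {K : Type*} [Field K]

theorem eq_zero_of_mul_eq_internalModel_mul_add {κ ν : Type*} [Fintype κ] [DecidableEq κ]
    [Fintype ν] [DecidableEq ν] {r : ℕ} {S : Matrix ν ν K} {β : Matrix (Fin r) (Fin r) K}
    {σ : Fin r → K} {G₁ : Matrix (κ × Fin r) (κ × Fin r) K} {G₂ : Matrix (κ × Fin r) κ K}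
    (hG₁ : G₁ = fun x y => if x.1 = y.1 then β x.2 y.2 else 0)
    (hG₂ : G₂ = fun x j => if x.1 = j then σ x.2 else 0)
    (hS : aeval S β.charpoly = 0) (hctrb : (controllabilityMatrix β σ).rank = r)
    {Z : Matrix (κ × Fin r) ν K} {e : Matrix κ ν K} (hZ : Z * S = G₁ * Z + G₂ * e) : e = 0 := by
  ext i t
  have hrow := congrArg (·.submatrix (Prod.mk i) id) hZ
  rw [submatrix_add, Pi.add_apply, Pi.add_apply, submatrix_prodMk_mul_of_blockDiag hG₁,
    submatrix_prodMk_mul_of_blockCol hG₂, submatrix_mul _ _ _ id _ Function.bijective_id,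
    submatrix_id_id] at hrow
  exact congrFun (eq_zero_of_mul_eq_mul_add_vecMulVec hS hctrb hrow) t

end RegulationError

end Matrix

theorem regulator_equations_unique_solution {n m p q r : ℕ}
    (A : Matrix (Fin n) (Fin n) ℝ) (B : Matrix (Fin n) (Fin m) ℝ)
    (C : Matrix (Fin p) (Fin n) ℝ) (D : Matrix (Fin p) (Fin m) ℝ)
    (E : Matrix (Fin n) (Fin q) ℝ) (F : Matrix (Fin p) (Fin q) ℝ)
    (S : Matrix (Fin q) (Fin q) ℝ)
    (β : Matrix (Fin r) (Fin r) ℝ) (σv : Fin r → ℝ)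
    (Kx : Matrix (Fin m) (Fin n) ℝ) (Kz : Matrix (Fin m) (Fin p × Fin r) ℝ)
    -- (G₁, G₂) is a minimum p-copy internal model of S
    (G₁ : Matrix (Fin p × Fin r) (Fin p × Fin r) ℝ)
    (G₂ : Matrix (Fin p × Fin r) (Fin p) ℝ)
    (hG₁ : G₁ = fun x y => if x.1 = y.1 then β x.2 y.2 else 0)
    (hG₂ : G₂ = fun x j => if x.1 = j then σv x.2 else 0)
    (hβ : β.charpoly = minpoly ℝ S)
    (hctrb : (Matrix.of fun (a : Fin r) (b : Fin r) => (β ^ (b : ℕ)).mulVec σv a).rank = r)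
    -- S has no eigenvalue with negative real part
    (hS : ∀ μ ∈ spectrum ℂ (S.map Complex.ofReal), 0 ≤ μ.re)
    -- Y + J K is Hurwitz, with K = [K_x, K_z]
    (hHur : IsHurwitz (Matrix.fromBlocks A 0 (G₂ * C) G₁ +
      Matrix.fromRows B (G₂ * D) * Matrix.fromCols Kx Kz)) :
    ∃! XZ : Matrix (Fin n) (Fin q) ℝ × Matrix (Fin p × Fin r) (Fin q) ℝ,
      XZ.1 * S = A * XZ.1 + B * (Kx * XZ.1 + Kz * XZ.2) + E ∧
      XZ.2 * S = G₁ * XZ.2 + G₂ * (C * XZ.1 + D * (Kx * XZ.1 + Kz * XZ.2) + F) ∧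
      0 = C * XZ.1 + D * (Kx * XZ.1 + Kz * XZ.2) + F := by
  obtain ⟨W, hW, hW_unique⟩ := existsUnique_mul_eq_mul_add
    (isUnit_aeval_charpoly_of_isHurwitz hHur hS) (fromRows E (G₂ * F))
  rw [← fromRows_toRows W, fromRows_mul_eq_closedLoop_iff] at hW
  have hS_annihilated : aeval S β.charpoly = 0 := hβ ▸ minpoly.aeval ℝ S
  have h_error := eq_zero_of_mul_eq_internalModel_mul_add hG₁ hG₂ hS_annihilated hctrb hW.2
  refine ⟨(W.toRows₁, W.toRows₂), ⟨hW.1, hW.2, h_error.symm⟩, ?_⟩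
  rintro ⟨X, Z⟩ ⟨hX, hZ, -⟩
  have hXZ := hW_unique (fromRows X Z) ((fromRows_mul_eq_closedLoop_iff ..).mpr ⟨hX, hZ⟩)
  exact Prod.ext_iff.mpr (fromRows_inj (hXZ.trans (fromRows_toRows W).symm))
end

section
/- Let ξ satisfy ξ̇ = (A + BK)ξ − B(Kξ − u) = Aξ + Bu, let K' = −R⁻¹BᵀP where P is symmetric, and suppose (A+BK)ᵀP + P(A+BK) + Q + KᵀRK = 0. Then for all t, δt > 0: ξ(t+δt)ᵀPξ(t+δt) − ξ(t)ᵀPξ(t) = ∫_t^{t+δt} [−ξᵀ(Q + KᵀRK)ξ + 2ξᵀKᵀRK'ξ − 2uᵀRK'ξ] dτ. -/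
open Matrix intervalIntegral

/-!
Along a trajectory, `d/dt (ξᵀ P ξ) = 2 (A ξ + B u)ᵀ P ξ` since `P` is symmetric. Evaluating the
Lyapunov equation of the closed loop `A + B K` on `ξ` gives
`2 (A ξ)ᵀ P ξ = -ξᵀ (Q + Kᵀ R K) ξ - 2 (B K ξ)ᵀ P ξ`, and `R K' = -Bᵀ P` turns the remaining
`B`-terms into `2 ξᵀ Kᵀ R K' ξ - 2 uᵀ R K' ξ`. The identity is then the fundamental theorem of
calculus; the integrand is continuous because `ξ` and `u` are.
-/

section Algebra

variable {ι κ α : Type*} [Fintype ι] [Fintype κ] [CommRing α]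

theorem Matrix.IsSymm.dotProduct_mulVec_comm_s16 {P : Matrix ι ι α} (hP : P.IsSymm) (x y : ι → α) :
    x ⬝ᵥ P *ᵥ y = y ⬝ᵥ P *ᵥ x := by
  rw [← dotProduct_transpose_mulVec, hP.eq]

theorem Matrix.IsSymm.dotProduct_mulVec_add_dotProduct_mulVec {P : Matrix ι ι α} (hP : P.IsSymm)
    (x y : ι → α) : x ⬝ᵥ P *ᵥ y + y ⬝ᵥ P *ᵥ x = 2 * (x ⬝ᵥ P *ᵥ y) := by
  rw [hP.dotProduct_mulVec_comm_s16 y]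
  ring

theorem Matrix.dotProduct_transpose_mul_mulVec (M : Matrix ι κ α) (N : Matrix ι ι α)
    (x : κ → α) (y : ι → α) : x ⬝ᵥ (Mᵀ * N) *ᵥ y = M *ᵥ x ⬝ᵥ N *ᵥ y := by
  rw [← mulVec_mulVec, dotProduct_transpose_mulVec, dotProduct_comm]

theorem Matrix.IsSymm.dotProduct_transpose_mul_add_mul_mulVec_self {P : Matrix ι ι α}
    (hP : P.IsSymm) (M : Matrix ι ι α) (x : ι → α) :
    x ⬝ᵥ (Mᵀ * P + P * M) *ᵥ x = 2 * (M *ᵥ x ⬝ᵥ P *ᵥ x) := by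
  rw [add_mulVec, dotProduct_add, dotProduct_transpose_mul_mulVec, ← mulVec_mulVec,
    hP.dotProduct_mulVec_add_dotProduct_mulVec]

theorem dotProduct_mulVec_flow_eq_of_lyapunov {A P Q : Matrix ι ι α} {B : Matrix ι κ α}
    {K K' : Matrix κ ι α} {R : Matrix κ κ α} (hP : P.IsSymm) (hRK' : R * K' = -(Bᵀ * P))
    (hlyap : (A + B * K)ᵀ * P + P * (A + B * K) + Q + Kᵀ * R * K = 0) (x : ι → α) (v : κ → α) :
    (A *ᵥ x + B *ᵥ v) ⬝ᵥ P *ᵥ x + x ⬝ᵥ P *ᵥ (A *ᵥ x + B *ᵥ v) =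
      -(x ⬝ᵥ (Q + Kᵀ * R * K) *ᵥ x) + 2 * (x ⬝ᵥ (Kᵀ * R * K') *ᵥ x) -
        2 * (v ⬝ᵥ (R * K') *ᵥ x) := by
  have hquad : 2 * ((A + B * K) *ᵥ x ⬝ᵥ P *ᵥ x) + x ⬝ᵥ (Q + Kᵀ * R * K) *ᵥ x = 0 := by
    rw [← hP.dotProduct_transpose_mul_add_mul_mulVec_self, ← dotProduct_add, ← add_mulVec,
      ← add_assoc, hlyap, zero_mulVec, dotProduct_zero]
  have hK' : x ⬝ᵥ (Kᵀ * R * K') *ᵥ x = -((B * K) *ᵥ x ⬝ᵥ P *ᵥ x) := by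
    rw [Matrix.mul_assoc, hRK', Matrix.mul_neg, ← Matrix.mul_assoc, ← transpose_mul, neg_mulVec,
      dotProduct_neg, dotProduct_transpose_mul_mulVec]
  have hv : v ⬝ᵥ (R * K') *ᵥ x = -(B *ᵥ v ⬝ᵥ P *ᵥ x) := by
    rw [hRK', neg_mulVec, dotProduct_neg, dotProduct_transpose_mul_mulVec]
  rw [add_mulVec, add_dotProduct] at hquad
  rw [hK', hv, hP.dotProduct_mulVec_add_dotProduct_mulVec, add_dotProduct]
  linear_combination hquad

end Algebra

section Calculus

variable {𝕜 ι : Type*} [NontriviallyNormedField 𝕜] [Fintype ι] {f g : 𝕜 → ι → 𝕜}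
  {f' g' : ι → 𝕜} {t : 𝕜}

theorem HasDerivAt.dotProduct (hf : HasDerivAt f f' t) (hg : HasDerivAt g g' t) :
    HasDerivAt (fun s => f s ⬝ᵥ g s) (f' ⬝ᵥ g t + f t ⬝ᵥ g') t :=
  (HasDerivAt.fun_sum (u := Finset.univ) fun i _ =>
    (hasDerivAt_pi.1 hf i).mul (hasDerivAt_pi.1 hg i)).congr_deriv Finset.sum_add_distrib

theorem HasDerivAt.matrix_mulVec {κ : Type*} (M : Matrix κ ι 𝕜) (hf : HasDerivAt f f' t) :
    HasDerivAt (fun s => M *ᵥ f s) (M *ᵥ f') t :=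
  hasDerivAt_pi.2 fun i => ((hasDerivAt_const t (M i)).dotProduct hf).congr_deriv <| by
    rw [zero_dotProduct, zero_add]
    rfl

theorem HasDerivAt.dotProduct_mulVec_self (P : Matrix ι ι 𝕜) (hf : HasDerivAt f f' t) :
    HasDerivAt (fun s => f s ⬝ᵥ P *ᵥ f s) (f' ⬝ᵥ P *ᵥ f t + f t ⬝ᵥ P *ᵥ f') t :=
  hf.dotProduct (hf.matrix_mulVec P)

end Calculus

theorem pi_integral_identity_general {n m : ℕ}
    (A : Matrix (Fin n) (Fin n) ℝ) (B : Matrix (Fin n) (Fin m) ℝ)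
    (K K' : Matrix (Fin m) (Fin n) ℝ)
    (P Q : Matrix (Fin n) (Fin n) ℝ) (R : Matrix (Fin m) (Fin m) ℝ)
    (hPs : P.IsSymm) (hR : R.PosDef)
    (hK' : K' = -(R⁻¹ * Bᵀ * P))
    (hlyap : (A + B * K)ᵀ * P + P * (A + B * K) + Q + Kᵀ * R * K = 0)
    (ξ : ℝ → Fin n → ℝ) (u : ℝ → Fin m → ℝ)
    (hu : Continuous u)
    (hξ : ∀ t, HasDerivAt ξ (A.mulVec (ξ t) + B.mulVec (u t)) t) :
    ∀ t : ℝ, ∀ δt : ℝ, 0 < δt →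
      ξ (t + δt) ⬝ᵥ P.mulVec (ξ (t + δt)) - ξ t ⬝ᵥ P.mulVec (ξ t) =
        ∫ τ in t..(t + δt),
          (-(ξ τ ⬝ᵥ (Q + Kᵀ * R * K).mulVec (ξ τ)) +
            2 * (ξ τ ⬝ᵥ (Kᵀ * R * K').mulVec (ξ τ)) -
            2 * (u τ ⬝ᵥ (R * K').mulVec (ξ τ))) := by
  intro t δt _
  have hξc : Continuous ξ := continuous_iff_continuousAt.2 fun τ => (hξ τ).continuousAt
  have hRK' : R * K' = -(Bᵀ * P) := by
    rw [hK', Matrix.mul_neg, Matrix.mul_assoc,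
      mul_nonsing_inv_cancel_left _ _ ((isUnit_iff_isUnit_det R).1 hR.isUnit)]
  refine (integral_eq_sub_of_hasDerivAt (f := fun s => ξ s ⬝ᵥ P *ᵥ ξ s) (fun τ _ => ?_)
    (Continuous.intervalIntegrable ?_ _ _)).symm
  · rw [← dotProduct_mulVec_flow_eq_of_lyapunov hPs hRK' hlyap]
    exact (hξ τ).dotProduct_mulVec_self P
  · fun_prop

theorem pi_integral_identity {n m : ℕ}
    (A : Matrix (Fin n) (Fin n) ℝ) (B : Matrix (Fin n) (Fin m) ℝ)
    (K K' : Matrix (Fin m) (Fin n) ℝ)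
    (P Q : Matrix (Fin n) (Fin n) ℝ) (R : Matrix (Fin m) (Fin m) ℝ)
    (hPs : P.IsSymm) (hQ : Q.PosSemidef) (hR : R.PosDef) (hRs : R.IsSymm)
    (hK' : K' = -(R⁻¹ * Bᵀ * P))
    (hlyap : (A + B * K)ᵀ * P + P * (A + B * K) + Q + Kᵀ * R * K = 0)
    (ξ : ℝ → Fin n → ℝ) (u : ℝ → Fin m → ℝ)
    (hu : Continuous u)
    (hξ : ∀ t, HasDerivAt ξ (A.mulVec (ξ t) + B.mulVec (u t)) t) :
    ∀ t : ℝ, ∀ δt : ℝ, 0 < δt →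
      ξ (t + δt) ⬝ᵥ P.mulVec (ξ (t + δt)) - ξ t ⬝ᵥ P.mulVec (ξ t) =
        ∫ τ in t..(t + δt),
          (-(ξ τ ⬝ᵥ (Q + Kᵀ * R * K).mulVec (ξ τ)) +
            2 * (ξ τ ⬝ᵥ (Kᵀ * R * K').mulVec (ξ τ)) -
            2 * (u τ ⬝ᵥ (R * K').mulVec (ξ τ))) :=
  pi_integral_identity_general A B K K' P Q R hPs hR hK' hlyap ξ u hu hξ
end
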